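/- arXiv:1711.01903 — 4 statements merged into one kernel-verified Lean document; each statement's English description precedes it below -/
import Mathlib

section
/- Let R be a reduced indecomposable commutative ring with unit (i.e., R has no non-zero nilpotents and its only idempotents are 0 and 1) and let G be a group such that for every field k the group algebra kG has only trivial units. Then the group algebra RG has only trivial units, i.e., every unit of RG is of the form r·g with r a unit of R and g ∈ G. -/
/-!
For a unit `u` of `R[G]` and a prime `p` of `R`, the image of `u` in `k[G]`, `k = Frac(R/p)`, is
trivial, so any product `u(g) u(h)` with `g ≠ h` lies in every prime, hence vanishes as `R` is
reduced. Writing `v = u⁻¹`, the elements `u(a⁻¹) v(a)` are then pairwise orthogonal and sum to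
`1`, so they are idempotents; by indecomposability one of them, at `a` say, equals `1`. Then
`u(a⁻¹)` is a unit and `u(g) = u(g) u(a⁻¹) v(a) = 0` for `g ≠ a⁻¹`.
-/

open MonoidAlgebra

universe u

def MonoidAlgebra.HasTrivialUnits (R G : Type*) [Semiring R] [Monoid G] : Prop :=
  ∀ x : (MonoidAlgebra R G)ˣ, ∃ (r : Rˣ) (g : G), (x : MonoidAlgebra R G) = single g (r : R)

theorem Finset.exists_eq_one_of_sum_eq_one_of_mul_eq_zero {R ι : Type*} [CommRing R]
    [Nontrivial R] (hR : ∀ e : R, e * e = e → e = 0 ∨ e = 1) {s : Finset ι} {c : ι → R}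
    (hsum : ∑ i ∈ s, c i = 1) (horth : ∀ i ∈ s, ∀ j ∈ s, i ≠ j → c i * c j = 0) :
    ∃ i ∈ s, c i = 1 := by
  have hidem (i : ι) (hi : i ∈ s) : c i * c i = c i := by
    calc c i * c i = c i * ∑ j ∈ s, c j := by
          rw [Finset.mul_sum, Finset.sum_eq_single_of_mem i hi]
          exact fun j hj hji => horth i hi j hj hji.symm
      _ = c i := by rw [hsum, mul_one]
  by_contra! hne
  have hzero : ∑ i ∈ s, c i = 0 :=
    Finset.sum_eq_zero fun i hi => (hR _ (hidem i hi)).resolve_right (hne i hi)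
  exact zero_ne_one (hzero.symm.trans hsum)

namespace MonoidAlgebra

variable {R S G : Type*}

theorem coeff_single_mul_coeff_single_of_ne [Semiring R] [Monoid G] (a : G) (r : R) {g h : G}
    (hgh : g ≠ h) : (single a r).coeff g * (single a r).coeff h = 0 := by
  classical
  rcases eq_or_ne a g with rfl | hag
  · simp [hgh]
  · simp [Finsupp.single_apply, hag]

theorem map_coeff_mul_coeff_eq_zero [Semiring R] [Semiring S] [Monoid G] (φ : R →+* S)
    (hS : HasTrivialUnits S G) (x : (MonoidAlgebra R G)ˣ) {g h : G} (hgh : g ≠ h) :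
    φ ((x : MonoidAlgebra R G).coeff g * (x : MonoidAlgebra R G).coeff h) = 0 := by
  obtain ⟨r, a, hx⟩ := hS (Units.map (mapRingHom G φ).toMonoidHom x)
  have := coeff_single_mul_coeff_single_of_ne a (r : S) hgh
  rw [← hx] at this
  simpa using this

theorem coeff_mul_coeff_eq_zero_of_isReduced {R : Type u} [CommRing R] [IsReduced R] [Monoid G]
    (hG : ∀ (k : Type u) [Field k], HasTrivialUnits k G) (x : (MonoidAlgebra R G)ˣ) {g h : G}
    (hgh : g ≠ h) : (x : MonoidAlgebra R G).coeff g * (x : MonoidAlgebra R G).coeff h = 0 := by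
  refine (nilpotent_iff_mem_prime.2 fun p hp => ?_).eq_zero
  let φ : R →+* FractionRing (R ⧸ p) := (algebraMap _ _).comp (Ideal.Quotient.mk p)
  have := map_coeff_mul_coeff_eq_zero φ (hG _) x hgh
  rwa [RingHom.comp_apply, IsFractionRing.to_map_eq_zero_iff,
    Ideal.Quotient.eq_zero_iff_mem] at this

theorem exists_eq_single_of_coeff_mul_coeff_eq_zero [CommRing R] [Group G]
    (hR : ∀ e : R, e * e = e → e = 0 ∨ e = 1) (x : (MonoidAlgebra R G)ˣ)
    (horth : ∀ g h : G, g ≠ h →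
      (x : MonoidAlgebra R G).coeff g * (x : MonoidAlgebra R G).coeff h = 0) :
    ∃ (r : Rˣ) (g : G), (x : MonoidAlgebra R G) = single g (r : R) := by
  nontriviality R
  set u := (x : MonoidAlgebra R G)
  set v := ((x⁻¹ : (MonoidAlgebra R G)ˣ) : MonoidAlgebra R G)
  have hsum : ∑ a ∈ v.coeff.support, u.coeff a⁻¹ * v.coeff a = 1 := by
    have h : (u * v).coeff 1 = 1 := by rw [x.mul_inv, coeff_one_one]
    rwa [coeff_mul_apply_right, Finsupp.sum, Finset.sum_congr rfl fun a _ => by rw [one_mul]] at h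
  obtain ⟨a, -, ha⟩ := Finset.exists_eq_one_of_sum_eq_one_of_mul_eq_zero hR hsum
    fun b _ c _ hbc => by
      calc u.coeff b⁻¹ * v.coeff b * (u.coeff c⁻¹ * v.coeff c)
          = u.coeff b⁻¹ * u.coeff c⁻¹ * (v.coeff b * v.coeff c) := by ring
        _ = 0 := by rw [horth _ _ (inv_injective.ne hbc), zero_mul]
  refine ⟨Units.mkOfMulEqOne _ _ ha, a⁻¹, ?_⟩
  ext g
  classical
  rw [coeff_single, Finsupp.single_apply]
  split_ifs with hg
  · subst hg; rfl
  · calc u.coeff g = u.coeff g * (u.coeff a⁻¹ * v.coeff a) := by rw [ha, mul_one]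
      _ = 0 := by rw [← mul_assoc, horth _ _ (Ne.symm hg), zero_mul]

theorem hasTrivialUnits_of_isReduced {R : Type u} [CommRing R] [IsReduced R] [Group G]
    (hR : ∀ e : R, e * e = e → e = 0 ∨ e = 1)
    (hG : ∀ (k : Type u) [Field k], HasTrivialUnits k G) : HasTrivialUnits R G := fun x =>
  exists_eq_single_of_coeff_mul_coeff_eq_zero hR x fun _ _ =>
    coeff_mul_coeff_eq_zero_of_isReduced hG x

end MonoidAlgebra

/-- If `R` is a reduced indecomposable commutative ring and `G` a group
such that `kG` has only trivial units for every field `k`, then `RG` has only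
trivial units. -/
theorem stmt2 {R : Type} [CommRing R] [IsReduced R]
    (hR : ∀ e : R, e * e = e → e = 0 ∨ e = 1)
    {G : Type} [Group G]
    (hG : ∀ (k : Type) [Field k], ∀ u : (MonoidAlgebra k G)ˣ,
      ∃ (r : kˣ) (g : G), (u : MonoidAlgebra k G) = MonoidAlgebra.single g (r : k)) :
    ∀ u : (MonoidAlgebra R G)ˣ, ∃ (r : Rˣ) (g : G),
      (u : MonoidAlgebra R G) = MonoidAlgebra.single g (r : R) :=
  hasTrivialUnits_of_isReduced hR hG
end

section
/- Let R be a commutative ring with unit and G a Hausdorff ample groupoid with convolution algebra RG (locally constant compactly supported R-valued functions on G⁽¹⁾). Let H be the interior of the isotropy bundle of G. Then the centralizer of the diagonal subalgebra D(G) = C_c(G⁽⁰⁾, R) in RG equals the set of functions in RG supported on H. -/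
/-- A topological groupoid whose arrows form the space `A`; objects are identified
with identity arrows via the source map. All structure maps are continuous and the
source map is a local homeomorphism (étale). -/
structure AmpleGroupoid (A : Type*) [TopologicalSpace A] where
  src : A → A
  rng : A → A
  comp : A → A → A
  inv : A → A
  src_src : ∀ a, src (src a) = src a
  rng_src : ∀ a, rng (src a) = src a
  src_rng : ∀ a, src (rng a) = rng a
  rng_rng : ∀ a, rng (rng a) = rng a
  src_comp : ∀ a b, src a = rng b → src (comp a b) = src b
  rng_comp : ∀ a b, src a = rng b → rng (comp a b) = rng a
  comp_assoc : ∀ a b c, src a = rng b → src b = rng c →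
    comp (comp a b) c = comp a (comp b c)
  id_comp : ∀ a, comp (rng a) a = a
  comp_id : ∀ a, comp a (src a) = a
  inv_comp : ∀ a, comp (inv a) a = src a
  comp_inv : ∀ a, comp a (inv a) = rng a
  src_inv : ∀ a, src (inv a) = rng a
  rng_inv : ∀ a, rng (inv a) = src a
  continuous_inv : Continuous inv
  continuous_comp : Continuous fun p : {p : A × A // src p.1 = rng p.2} =>
    comp p.1.1 p.1.2
  isLocalHomeomorph_src : IsLocalHomeomorph src
  isLocalHomeomorph_rng : IsLocalHomeomorph rng

namespace AmpleGroupoid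

variable {A : Type*} [TopologicalSpace A] (G : AmpleGroupoid A)

/-- The unit space (identity arrows). -/
def units : Set A := Set.range G.src

/-- The unit space has a basis of compact open sets (ampleness). -/
def AmpleUnits : Prop := ∀ U : Set A, IsOpen U → ∀ a ∈ U ∩ G.units,
  ∃ K : Set A, IsCompact K ∧ IsOpen K ∧ a ∈ K ∧ K ⊆ U ∩ G.units

/-- The unit space is Hausdorff. -/
def UnitsT2 : Prop := ∀ a ∈ G.units, ∀ b ∈ G.units, a ≠ b →
  ∃ U V : Set A, IsOpen U ∧ IsOpen V ∧ a ∈ U ∧ b ∈ V ∧ Disjoint U V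

/-- A (open) local bisection: an open set on which both `src` and `rng` are injective. -/
def IsBisection (U : Set A) : Prop :=
  IsOpen U ∧ Set.InjOn G.src U ∧ Set.InjOn G.rng U

/-- Pointwise product of subsets of arrows. -/
def setMul (U V : Set A) : Set A :=
  {c | ∃ a ∈ U, ∃ b ∈ V, G.src a = G.rng b ∧ c = G.comp a b}

/-- Pointwise inverse of a subset of arrows. -/
def setInv (U : Set A) : Set A := G.inv '' U

/-- Members of `Γ_c(G)`: compact open local bisections. -/
def Gamma (U : Set A) : Prop := IsCompact U ∧ G.IsBisection U

end AmpleGroupoid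

namespace AmpleGroupoid

variable {A : Type*} [TopologicalSpace A] {R : Type*} [CommRing R]

/-- The convolution product on `R`-valued functions on the arrow space:
`(f * g)(γ) = Σ_{d(α) = d(γ)} f(γα⁻¹) g(α)`. -/
noncomputable def conv (G : AmpleGroupoid A) (f g : A → R) : A → R :=
  fun γ => ∑ᶠ (α : A) (_ : G.src α = G.src γ), f (G.comp γ (G.inv α)) * g α

/-- Membership in the convolution algebra `RG`: locally constant with compact
support. -/
def InRG (f : A → R) : Prop :=
  IsLocallyConstant f ∧ IsCompact (Function.support f)

/-- Membership in the diagonal subalgebra `D(G)`: an element of `RG` supported on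
the unit space. -/
def InDiag (G : AmpleGroupoid A) (f : A → R) : Prop :=
  InRG f ∧ Function.support f ⊆ G.units

/-- The isotropy bundle: arrows with equal source and range. -/
def iso (G : AmpleGroupoid A) : Set A := {a | G.src a = G.rng a}

end AmpleGroupoid


namespace AmpleGroupoid

variable {A : Type*} [TopologicalSpace A] {R : Type*} [CommRing R]

theorem unit_src {G : AmpleGroupoid A} {a : A} (h : a ∈ G.units) : G.src a = a := by
  obtain ⟨b, rfl⟩ := h; exact G.src_src b

theorem unit_rng {G : AmpleGroupoid A} {a : A} (h : a ∈ G.units) : G.rng a = a := by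
  obtain ⟨b, rfl⟩ := h; exact G.rng_src b

theorem inv_unit {G : AmpleGroupoid A} {a : A} (h : a ∈ G.units) : G.inv a = a := by
  have h1 : G.src (G.inv a) = a := by rw [G.src_inv, unit_rng h]
  have h2 : G.inv a = G.comp (G.inv a) a := by
    conv_lhs => rw [← G.comp_id (G.inv a), h1]
  rw [h2, G.inv_comp, unit_src h]

theorem src_mem_units (G : AmpleGroupoid A) (a : A) : G.src a ∈ G.units := ⟨a, rfl⟩

/-- Convolution with a diagonal element on the right. -/
theorem conv_diag_right (G : AmpleGroupoid A) (f g : A → R)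
    (hg : Function.support g ⊆ G.units) (γ : A) :
    G.conv f g γ = f γ * g (G.src γ) := by
  classical
  unfold conv
  rw [finsum_eq_single _ (G.src γ)]
  · rw [finsum_eq_if, if_pos (G.src_src γ), inv_unit (G.src_mem_units γ), G.comp_id]
  · intro α hα
    by_cases h : G.src α = G.src γ
    · have hga : g α = 0 := by
        by_contra hne
        have hu := hg hne
        exact hα ((unit_src hu).symm.trans h)
      simp [hga]
    · haveI : IsEmpty (G.src α = G.src γ) := ⟨h⟩
      exact finsum_of_isEmpty _

/-- Convolution with a diagonal element on the left. -/
theorem conv_diag_left (G : AmpleGroupoid A) (f g : A → R)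
    (hg : Function.support g ⊆ G.units) (γ : A) :
    G.conv g f γ = g (G.rng γ) * f γ := by
  classical
  unfold conv
  rw [finsum_eq_single _ γ]
  · rw [finsum_eq_if, if_pos rfl, G.comp_inv]
  · intro α hα
    by_cases h : G.src α = G.src γ
    · have hgz : g (G.comp γ (G.inv α)) = 0 := by
        by_contra hne
        have hu := hg hne
        have hsa : G.src γ = G.rng (G.inv α) := by rw [G.rng_inv, h]
        have hβ : G.comp γ (G.inv α) = G.rng α := by
          have h' := unit_src hu
          rw [G.src_comp _ _ hsa, G.src_inv] at h'
          exact h'.symm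
        have : γ = α := by
          have h1 : γ = G.comp γ (G.comp (G.inv α) α) := by
            rw [G.inv_comp, h, G.comp_id]
          rw [← G.comp_assoc γ (G.inv α) α hsa (G.src_inv α), hβ, G.id_comp] at h1
          exact h1
        exact hα this.symm
      simp [hgz]
    · haveI : IsEmpty (G.src α = G.src γ) := ⟨h⟩
      exact finsum_of_isEmpty _

end AmpleGroupoid

open AmpleGroupoid in
/-- For a Hausdorff ample groupoid `G` over a commutative ring `R`,
the centralizer of the diagonal subalgebra `D(G)` in the convolution algebra `RG`
is exactly the set of elements of `RG` supported on the interior `H` of the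
isotropy bundle. -/
theorem stmt14 {A : Type*} [TopologicalSpace A] [T2Space A]
    {R : Type*} [CommRing R]
    (G : AmpleGroupoid A) (hG : G.AmpleUnits) :
    {f : A → R | InRG f ∧ ∀ g : A → R, G.InDiag g → G.conv f g = G.conv g f} =
    {f : A → R | InRG f ∧ Function.support f ⊆ interior G.iso} := by
  ext f
  simp only [Set.mem_setOf_eq, and_congr_right_iff]
  intro hf
  constructor
  · intro h
    -- support f is open since f is locally constant
    have hopen : IsOpen (Function.support f) := hf.1 {0}ᶜ
    have hiso : Function.support f ⊆ G.iso := by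
      intro γ hγ
      by_contra hne
      have hne' : G.src γ ≠ G.rng γ := hne
      -- build a separating diagonal element
      obtain ⟨K, hKc, hKo, hKmem, hKsub⟩ :=
        hG {G.rng γ}ᶜ (isOpen_compl_singleton) (G.src γ)
          ⟨fun h' => hne' (h' : G.src γ = G.rng γ), G.src_mem_units γ⟩
      have hfγ : f γ ≠ 0 := hγ
      have h10 : (1 : R) ≠ 0 := by
        intro h1
        exact hfγ (by rw [← mul_one (f γ), h1, mul_zero])
      set g : A → R := Set.indicator K (fun _ => 1) with hgdef
      have hgsupp : Function.support g = K := by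
        ext x
        simp [hgdef, Set.indicator_apply, Function.mem_support, h10]
      have hKclosed : IsClosed K := hKc.isClosed
      have hglc : IsLocallyConstant g := by
        classical
        intro s
        have : g ⁻¹' s =
            (if (1 : R) ∈ s then K else ∅) ∪ (if (0 : R) ∈ s then Kᶜ else ∅) := by
          ext x
          by_cases h1 : (1 : R) ∈ s <;> by_cases h0 : (0 : R) ∈ s <;>
            by_cases hx : x ∈ K <;>
            simp [hgdef, Set.indicator_apply, hx, h1, h0]
        rw [this]
        apply IsOpen.union <;> split_ifs <;>
          first
          | exact hKo
          | exact hKclosed.isOpen_compl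
          | exact isOpen_empty
      have hgdiag : G.InDiag g := by
        refine ⟨⟨hglc, ?_⟩, ?_⟩
        · rw [hgsupp]; exact hKc
        · rw [hgsupp]; exact fun x hx => (hKsub hx).2
      have := congrFun (h g hgdiag) γ
      rw [G.conv_diag_right f g (fun x hx => (hKsub ((hgsupp ▸ hx) : x ∈ K)).2) γ,
          G.conv_diag_left f g (fun x hx => (hKsub ((hgsupp ▸ hx) : x ∈ K)).2) γ] at this
      have hsrc : g (G.src γ) = 1 := by simp [hgdef, Set.indicator_apply, hKmem]
      have hrng : g (G.rng γ) = 0 := by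
        have : G.rng γ ∉ K := fun hmem => (hKsub hmem).1 rfl
        simp [hgdef, Set.indicator_apply, this]
      rw [hsrc, hrng, mul_one, zero_mul] at this
      exact hfγ this
    exact interior_maximal hiso hopen
  · intro hsupp g hgdiag
    funext γ
    rw [G.conv_diag_right f g hgdiag.2 γ, G.conv_diag_left f g hgdiag.2 γ]
    by_cases hfγ : f γ = 0
    · rw [hfγ, zero_mul, mul_zero]
    · have hmem : γ ∈ interior G.iso := hsupp hfγ
      have hiso : γ ∈ G.iso := interior_subset hmem
      rw [show G.src γ = G.rng γ from hiso, mul_comm]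
end

section
/- Let K be a normal inverse subsemigroup of an inverse semigroup S (K full, sKs* ⊆ K for all s ∈ S) such that a*a = aa* for all a ∈ K. Then the relation s ∼ t defined by s*s = t*t and st* ∈ K is an idempotent-separating congruence on S whose kernel (preimage of idempotents in S/∼) is K. -/
/-- An inverse semigroup: every element has a unique weak inverse `star s`. -/
class InverseSemigroup (S : Type*) extends Semigroup S where
  star : S → S
  mul_star_mul : ∀ s : S, s * star s * s = s
  star_mul_star : ∀ s : S, star s * s * star s = star s
  star_unique : ∀ s t : S, s * t * s = s → t * s * t = t → t = star s

namespace ISAux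
open InverseSemigroup
variable {S : Type*} [InverseSemigroup S]

lemma ss (s : S) : s * star s * s = s := mul_star_mul s
lemma sss (s : S) : star s * s * star s = star s := star_mul_star s

lemma istar_star (s : S) : star (star s) = s :=
  (star_unique (star s) s (sss s) (ss s)).symm

lemma star_idem {e : S} (he : e * e = e) : star e = e :=
  (star_unique e e (by rw [he, he]) (by rw [he, he])).symm

lemma mcons {a b c : S} (h : a * b = c) (y : S) : a * (b * y) = c * y := by
  rw [← mul_assoc, h]

lemma mcons2 {a b c d : S} (h : a * b = c * d) (y : S) :
    a * (b * y) = c * (d * y) := by rw [← mul_assoc, h, mul_assoc]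

lemma ssc (s y : S) : s * (star s * (s * y)) = s * y := by
  rw [← mul_assoc, ← mul_assoc, ss]

lemma sssc (s y : S) : star s * (s * (star s * y)) = star s * y := by
  rw [← mul_assoc, ← mul_assoc, sss]

lemma idem_left (s : S) : (star s * s) * (star s * s) = star s * s := by
  rw [← mul_assoc, sss]

lemma idem_right (s : S) : (s * star s) * (s * star s) = s * star s := by
  rw [← mul_assoc, ss]

lemma mul_idem {e f : S} (he : e * e = e) (hf : f * f = f) :
    (e * f) * (e * f) = e * f := by
  set x := star (e * f) with hx
  have hA : (e * f) * x * (e * f) = e * f := ss (e * f)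
  have hB : x * (e * f) * x = x := sss (e * f)
  have hB' : x * (e * (f * (x * e))) = x * e := by
    simpa only [mul_assoc] using congrArg (· * e) hB
  have h1 : (e * f) * (f * x * e) * (e * f) = e * f := by
    calc (e * f) * (f * x * e) * (e * f)
        = e * (f * (f * (x * (e * (e * f))))) := by simp only [mul_assoc]
      _ = e * (f * (x * (e * f))) := by rw [mcons hf, mcons he]
      _ = e * f := by simpa only [mul_assoc] using hA
  have h2 : (f * x * e) * (e * f) * (f * x * e) = f * x * e := by
    calc (f * x * e) * (e * f) * (f * x * e)
        = f * (x * (e * (e * (f * (f * (x * e)))))) := by simp only [mul_assoc]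
      _ = f * (x * (e * (f * (x * e)))) := by rw [mcons he, mcons hf]
      _ = f * (x * e) := by rw [hB']
      _ = f * x * e := by rw [mul_assoc]
  have h3 : f * x * e = x := star_unique (e * f) (f * x * e) h1 h2
  have h4' : (f * x * e) * (f * x * e) = f * x * e := by
    calc (f * x * e) * (f * x * e)
        = f * (x * (e * (f * (x * e)))) := by simp only [mul_assoc]
      _ = f * (x * e) := by rw [hB']
      _ = f * x * e := by rw [mul_assoc]
  rw [h3] at h4'
  have h5 : e * f = star x := star_unique x (e * f) hB hA
  have h6 : x = star x := star_unique x x (by rw [h4', h4']) (by rw [h4', h4'])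
  rw [h5.trans h6.symm]
  exact h4'

lemma idem_comm {e f : S} (he : e * e = e) (hf : f * f = f) : e * f = f * e := by
  have hef := mul_idem he hf
  have hfe := mul_idem hf he
  have h1 : (e * f) * (f * e) * (e * f) = e * f := by
    calc (e * f) * (f * e) * (e * f)
        = e * (f * (f * (e * (e * f)))) := by simp only [mul_assoc]
      _ = e * (f * (e * f)) := by rw [mcons hf, mcons he]
      _ = e * f := by simpa only [mul_assoc] using hef
  have h2 : (f * e) * (e * f) * (f * e) = f * e := by
    calc (f * e) * (e * f) * (f * e)
        = f * (e * (e * (f * (f * e)))) := by simp only [mul_assoc]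
      _ = f * (e * (f * e)) := by rw [mcons he, mcons hf]
      _ = f * e := by simpa only [mul_assoc] using hfe
  have := star_unique (e * f) (f * e) h1 h2
  rw [star_idem hef] at this
  exact this.symm

lemma istar_mul (s t : S) : star (s * t) = star t * star s := by
  have c1 : (t * star t) * (star s * s) = (star s * s) * (t * star t) :=
    idem_comm (idem_right t) (idem_left s)
  have c1' : ∀ y : S, t * (star t * (star s * (s * y)))
      = star s * (s * (t * (star t * y))) := fun y => by
    simpa only [mul_assoc] using congrArg (· * y) c1
  have tst : t * (star t * t) = t := by rw [← mul_assoc]; exact ss t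
  have sts : star s * (s * star s) = star s := by rw [← mul_assoc]; exact sss s
  have h1 : (s * t) * (star t * star s) * (s * t) = s * t := by
    calc (s * t) * (star t * star s) * (s * t)
        = s * (t * (star t * (star s * (s * t)))) := by simp only [mul_assoc]
      _ = s * (star s * (s * (t * (star t * t)))) := by rw [c1' t]
      _ = s * (t * (star t * t)) := ssc s _
      _ = s * t := by rw [tst]
  have h2 : (star t * star s) * (s * t) * (star t * star s) = star t * star s := by
    calc (star t * star s) * (s * t) * (star t * star s)
        = star t * (star s * (s * (t * (star t * star s)))) := by simp only [mul_assoc]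
      _ = star t * (t * (star t * (star s * (s * star s)))) := by rw [← c1' (star s)]
      _ = star t * (t * (star t * star s)) := by rw [sts]
      _ = star t * star s := sssc t _
  exact (star_unique (s * t) (star t * star s) h1 h2).symm

end ISAux

open ISAux

open InverseSemigroup in
/-- A normal inverse subsemigroup `K` of an inverse semigroup `S`
(full, `sKs* ⊆ K`) with `a*a = aa*` for all `a ∈ K` determines an
idempotent-separating congruence `s ∼ t ⟺ s*s = t*t ∧ st* ∈ K`, whose kernel is `K`. -/
theorem stmt18 {S : Type*} [InverseSemigroup S] (K : Set S)
    (hmul : ∀ a ∈ K, ∀ b ∈ K, a * b ∈ K)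
    (hstar : ∀ a ∈ K, star a ∈ K)
    (hfull : ∀ e : S, e * e = e → e ∈ K)
    (hnormal : ∀ s : S, ∀ a ∈ K, s * a * star s ∈ K)
    (hcomm : ∀ a ∈ K, star a * a = a * star a) :
    letI r : S → S → Prop := fun s t => star s * s = star t * t ∧ s * star t ∈ K
    Equivalence r ∧
    (∀ s t u v : S, r s t → r u v → r (s * u) (t * v)) ∧
    (∀ e f : S, e * e = e → f * f = f → r e f → e = f) ∧
    (∀ s : S, (∃ e : S, e * e = e ∧ r s e) ↔ s ∈ K) := by
  refine ⟨⟨?refl, ?symm, ?trans⟩, ?compat, ?sep, ?ker⟩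
  case refl =>
    intro s
    exact ⟨rfl, hfull _ (idem_right s)⟩
  case symm =>
    intro s t ⟨h1, h2⟩
    refine ⟨h1.symm, ?_⟩
    have := hstar _ h2
    rwa [istar_mul, istar_star] at this
  case trans =>
    intro s t u ⟨h1, h2⟩ ⟨h3, h4⟩
    refine ⟨h1.trans h3, ?_⟩
    have hK := hmul _ h2 _ h4
    have key : star t * (t * star u) = star s * (s * star u) := by
      rw [← mul_assoc, ← h1, mul_assoc]
    have heq : (s * star t) * (t * star u) = s * star u := by
      calc (s * star t) * (t * star u)
          = s * (star t * (t * star u)) := by simp only [mul_assoc]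
        _ = s * (star s * (s * star u)) := by rw [key]
        _ = s * star u := ssc s _
    rwa [heq] at hK
  case compat =>
    intro s t u v h1 h2
    obtain ⟨h11, h12⟩ := h1
    obtain ⟨h21, h22⟩ := h2
    -- abbreviations
    have he : (star s * s) * (star s * s) = star s * s := idem_left s
    have hsa : star (u * star v) = v * star u := by rw [istar_mul, istar_star]
    -- u u* = v v*
    have huv : u * star u = v * star v := by
      have hc := hcomm _ h22
      rw [hsa] at hc
      have l : (v * star u) * (u * star v) = v * star v := by
        calc (v * star u) * (u * star v)
            = v * (star u * (u * star v)) := by simp only [mul_assoc]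
          _ = v * (star v * (v * star v)) := by rw [mcons2 h21]
          _ = v * star v := ssc v _
      have rr : (u * star v) * (v * star u) = u * star u := by
        calc (u * star v) * (v * star u)
            = u * (star v * (v * star u)) := by simp only [mul_assoc]
          _ = u * (star u * (u * star u)) := by rw [mcons2 h21.symm]
          _ = u * star u := ssc u _
      rw [l, rr] at hc
      exact hc.symm
    -- the key identity from hcomm applied to (u * star v) * (star s * s)
    have haeK : (u * star v) * (star s * s) ∈ K := hmul _ h22 _ (hfull _ he)
    have hc2 := hcomm _ haeK
    rw [istar_mul, hsa, star_idem he] at hc2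
    -- hc2 : (star s * s * (v * star u)) * ((u * star v) * (star s * s))
    --     = ((u * star v) * (star s * s)) * (star s * s * (v * star u))
    have ecomm : (star s * s) * (u * star u) = (u * star u) * (star s * s) :=
      idem_comm he (idem_right u)
    have ecomm' : ∀ y : S, star s * (s * (u * (star u * y)))
        = u * (star u * (star s * (s * y))) := fun y => by
      simpa only [mul_assoc] using congrArg (· * y) ecomm
    have hL : (star s * s * (v * star u)) * ((u * star v) * (star s * s))
        = u * (star u * (star s * s)) := by
      calc (star s * s * (v * star u)) * ((u * star v) * (star s * s))
          = star s * (s * (v * (star u * (u * (star v * (star s * s)))))) := by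
            simp only [mul_assoc]
        _ = star s * (s * (v * (star v * (v * (star v * (star s * s)))))) := by
            rw [mcons2 h21]
        _ = star s * (s * (v * (star v * (star s * s)))) := by rw [ssc v]
        _ = star s * (s * (u * (star u * (star s * s)))) := by rw [mcons2 huv.symm]
        _ = u * (star u * (star s * (s * (star s * s)))) := ecomm' _
        _ = u * (star u * (star s * s)) := by rw [sssc s]
    have hR : ((u * star v) * (star s * s)) * (star s * s * (v * star u))
        = (u * star v) * (star s * (s * (v * star u))) := by
      calc ((u * star v) * (star s * s)) * (star s * s * (v * star u))
          = u * (star v * (star s * (s * (star s * (s * (v * star u)))))) := by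
            simp only [mul_assoc]
        _ = u * (star v * (star s * (s * (v * star u)))) := by rw [sssc s]
        _ = (u * star v) * (star s * (s * (v * star u))) := by simp only [mul_assoc]
    have hkey : (u * star v) * (star s * (s * (v * star u)))
        = u * (star u * (star s * s)) := by rw [← hR, ← hc2, hL]
    -- Goal 1 : star (s*u) * (s*u) = star (t*v) * (t*v)
    have expand : star u * (u * (star v * (star s * (s * (v * (star u * u))))))
        = star v * (star s * (s * v)) := by
      calc star u * (u * (star v * (star s * (s * (v * (star u * u))))))
          = star v * (v * (star v * (star s * (s * (v * (star v * v)))))) := by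
            rw [mcons2 h21, h21]
        _ = star v * (star s * (s * (v * (star v * v)))) := sssc v _
        _ = star v * (star s * (s * v)) := by
            rw [show v * (star v * v) = v from by rw [← mul_assoc]; exact ss v]
    have expand2 : star u * (u * (star v * (star s * (s * (v * (star u * u))))))
        = star u * (((u * star v) * (star s * (s * (v * star u)))) * u) := by
      simp only [mul_assoc]
    have final : star u * (((u * star v) * (star s * (s * (v * star u)))) * u)
        = star u * (star s * (s * u)) := by
      rw [hkey]
      calc star u * ((u * (star u * (star s * s))) * u)
          = star u * (u * (star u * (star s * (s * u)))) := by simp only [mul_assoc]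
        _ = star u * (star s * (s * u)) := sssc u _
    have g1main : star u * (star s * (s * u)) = star v * (star s * (s * v)) := by
      rw [← final, ← expand2, expand]
    have g1 : star (s * u) * (s * u) = star (t * v) * (t * v) := by
      rw [istar_mul s u, istar_mul t v]
      calc (star u * star s) * (s * u)
          = star u * (star s * (s * u)) := by simp only [mul_assoc]
        _ = star v * (star s * (s * v)) := g1main
        _ = star v * ((star s * s) * v) := by rw [← mul_assoc (star s) s v]
        _ = star v * ((star t * t) * v) := by rw [h11]
        _ = (star v * star t) * (t * v) := by simp only [mul_assoc]
    refine ⟨g1, ?_⟩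
    -- Goal 2 : (s*u) * star (t*v) ∈ K
    have hterm : (s * ((u * star v) * (star s * s)) * star s) * (s * star t)
        = (s * u) * star (t * v) := by
      rw [istar_mul t v]
      calc (s * ((u * star v) * (star s * s)) * star s) * (s * star t)
          = s * (u * (star v * (star s * (s * (star s * (s * star t)))))) := by
            simp only [mul_assoc]
        _ = s * (u * (star v * (star s * (s * star t)))) := by rw [sssc s]
        _ = s * (u * (star v * (star t * (t * star t)))) := by rw [mcons2 h11]
        _ = s * (u * (star v * star t)) := by
            rw [show star t * (t * star t) = star t from by rw [← mul_assoc]; exact sss t]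
        _ = (s * u) * (star v * star t) := by simp only [mul_assoc]
    have hmem1 : s * ((u * star v) * (star s * s)) * star s ∈ K :=
      hnormal s _ (hmul _ h22 _ (hfull _ he))
    have hmem : (s * ((u * star v) * (star s * s)) * star s) * (s * star t) ∈ K :=
      hmul _ hmem1 _ h12
    rwa [hterm] at hmem
  case sep =>
    intro e f he hf ⟨h1, _⟩
    rwa [star_idem he, star_idem hf, he, hf] at h1
  case ker =>
    intro s
    constructor
    · rintro ⟨e, he, h1, h2⟩
      rw [star_idem he] at h2
      rw [star_idem he, he] at h1
      have hse : s = s * e := by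
        rw [← h1, ← mul_assoc]; exact (ss s).symm
      rwa [← hse] at h2
    · intro hs
      refine ⟨star s * s, idem_left s, ?_, ?_⟩
      · rw [star_idem (idem_left s)]
        exact (idem_left s).symm
      · rw [star_idem (idem_left s), ← mul_assoc, ss]
        exact hs
end

section
/- Let G be an ample groupoid with Hausdorff unit space. If the inverse semigroup Γ_c(G) of compact Hausdorff open local bisections admits binary meets (greatest lower bounds in the natural partial order), then the arrow space of G is Hausdorff; conversely if G is Hausdorff then Γ_c(G) has binary meets given by intersections. -/
namespace AmpleGroupoid

/-- A compact Hausdorff open local bisection (member of `Γ_c(G)` in the possibly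
non-Hausdorff setting). -/
def GammaH {A : Type*} [TopologicalSpace A] (G : AmpleGroupoid A) (U : Set A) : Prop :=
  IsCompact U ∧ G.IsBisection U ∧ T2Space U

end AmpleGroupoid

/-!
Two arrows with different sources are separated by pulling back disjoint neighbourhoods of
their sources. Two distinct arrows `a`, `b` with the same source lie in compact Hausdorff open
bisections `U ∋ a`, `V ∋ b` with `a ∉ V` and `b ∉ U`. Since every open set is a union of members
of `Γ_c(G)`, the meet of `U` and `V` can only be `U ∩ V`, which is therefore compact, hence closed
in the Hausdorff spaces `U` and `V`; so `U \ V` and `V \ U` are disjoint open neighbourhoods of `a`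
and `b`. Conversely, in a Hausdorff arrow space intersections of compact sets stay compact.
-/

open Filter Topology

theorem OpenPartialHomeomorph.isCompact_source_inter_preimage {X Y : Type*} [TopologicalSpace X]
    [TopologicalSpace Y] (e : OpenPartialHomeomorph X Y) {K : Set Y} (hK : IsCompact K)
    (hKe : K ⊆ e.target) : IsCompact (e.source ∩ e ⁻¹' K) :=
  e.symm_image_eq_source_inter_preimage hKe ▸
    hK.image_of_continuousOn (e.continuousOn_symm.mono hKe)

theorem IsOpen.isOpen_sdiff_of_isCompact_inter {X : Type*} [TopologicalSpace X] {U V : Set X}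
    (hU : IsOpen U) [T2Space U] (hUV : IsCompact (U ∩ V)) : IsOpen (U \ V) := by
  have hV : IsCompact ((↑) ⁻¹' V : Set U) := by
    rwa [Topology.IsEmbedding.subtypeVal.isCompact_iff, Subtype.image_preimage_coe]
  have := hU.isOpenMap_subtype_val _ hV.isClosed.isOpen_compl
  rwa [← Set.preimage_compl, Subtype.image_preimage_coe] at this

namespace AmpleGroupoid

variable {A : Type*} [TopologicalSpace A] (G : AmpleGroupoid A)

theorem disjoint_nhds_of_src_ne (hT2 : G.UnitsT2) {a b : A} (hab : G.src a ≠ G.src b) :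
    Disjoint (𝓝 a) (𝓝 b) := by
  obtain ⟨O₁, O₂, hO₁, hO₂, ha, hb, hO⟩ := hT2 _ ⟨a, rfl⟩ _ ⟨b, rfl⟩ hab
  have hsrc := G.isLocalHomeomorph_src.continuous
  exact disjoint_of_disjoint_of_mem (hO.preimage G.src)
    ((hO₁.preimage hsrc).mem_nhds ha) ((hO₂.preimage hsrc).mem_nhds hb)

theorem t2Space_of_injOn_src (hT2 : G.UnitsT2) {U : Set A} (hU : Set.InjOn G.src U) :
    T2Space U :=
  t2Space_iff_disjoint_nhds.2 fun x y hxy => by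
    show Disjoint _ _
    rw [nhds_subtype, nhds_subtype]
    exact disjoint_comap <| G.disjoint_nhds_of_src_ne hT2 fun h => hxy (Subtype.ext (hU x.2 y.2 h))

theorem exists_gammaH_mem_subset (hG : G.AmpleUnits) (hT2 : G.UnitsT2) {a : A} {S : Set A}
    (hS : IsOpen S) (ha : a ∈ S) : ∃ U : Set A, G.GammaH U ∧ a ∈ U ∧ U ⊆ S := by
  obtain ⟨e₀, hae₀, hsrc⟩ := G.isLocalHomeomorph_src a
  obtain ⟨f, haf, hrng⟩ := G.isLocalHomeomorph_rng a
  set e := e₀.restrOpen (f.source ∩ S) (f.open_source.inter hS)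
  have he : G.src = e := hsrc
  have hae : a ∈ e.source := ⟨hae₀, haf, ha⟩
  obtain ⟨K, hK, hKo, haK, hKe⟩ :=
    hG e.target e.open_target (G.src a) ⟨congrFun he a ▸ e.map_source hae, a, rfl⟩
  have hUe : e.source ∩ G.src ⁻¹' K = e.source ∩ e ⁻¹' K := by rw [he]
  have hinj : Set.InjOn G.src (e.source ∩ G.src ⁻¹' K) := he ▸ e.injOn.mono fun _ hx => hx.1
  refine ⟨e.source ∩ G.src ⁻¹' K, ⟨?_, ⟨?_, hinj, ?_⟩, G.t2Space_of_injOn_src hT2 hinj⟩,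
    ⟨hae, haK⟩, fun _ hx => hx.1.2.2⟩
  · exact hUe ▸ e.isCompact_source_inter_preimage hK fun _ hx => (hKe hx).1
  · exact hUe ▸ e.isOpen_inter_preimage hKo
  · exact hrng ▸ f.injOn.mono fun _ hx => hx.1.2.1

theorem subset_of_forall_gammaH_subset (hG : G.AmpleUnits) (hT2 : G.UnitsT2) {O W : Set A}
    (hO : IsOpen O) (h : ∀ U, G.GammaH U → U ⊆ O → U ⊆ W) : O ⊆ W := fun _ hx =>
  let ⟨U, hU, hxU, hUO⟩ := G.exists_gammaH_mem_subset hG hT2 hO hx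
  h U hU hUO hxU

theorem disjoint_nhds_of_src_eq (hG : G.AmpleUnits) (hT2 : G.UnitsT2)
    (hmeet : ∀ U V : Set A, G.GammaH U → G.GammaH V →
        ∃ W : Set A, G.GammaH W ∧ W ⊆ U ∧ W ⊆ V ∧
          ∀ W' : Set A, G.GammaH W' → W' ⊆ U → W' ⊆ V → W' ⊆ W)
    {a b : A} (hab : a ≠ b) (hs : G.src a = G.src b) : Disjoint (𝓝 a) (𝓝 b) := by
  obtain ⟨U, hU, haU, -⟩ := G.exists_gammaH_mem_subset hG hT2 isOpen_univ (Set.mem_univ a)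
  obtain ⟨V, hV, hbV, -⟩ := G.exists_gammaH_mem_subset hG hT2 isOpen_univ (Set.mem_univ b)
  obtain ⟨W, hW, hWU, hWV, hWmax⟩ := hmeet U V hU hV
  obtain ⟨-, ⟨hUo, hUs, -⟩, _⟩ := hU
  obtain ⟨-, ⟨hVo, hVs, -⟩, _⟩ := hV
  have haV : a ∉ V := fun haV => hab (hVs haV hbV hs)
  have hbU : b ∉ U := fun hbU => hab (hUs haU hbU hs)
  have hW_eq : W = U ∩ V := (Set.subset_inter hWU hWV).antisymm <|
    G.subset_of_forall_gammaH_subset hG hT2 (hUo.inter hVo) fun W' hW' hW'UV =>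
      hWmax W' hW' (hW'UV.trans Set.inter_subset_left) (hW'UV.trans Set.inter_subset_right)
  have hUV : IsCompact (U ∩ V) := hW_eq ▸ hW.1
  exact disjoint_of_disjoint_of_mem disjoint_sdiff_sdiff
    ((hUo.isOpen_sdiff_of_isCompact_inter hUV).mem_nhds ⟨haU, haV⟩)
    ((hVo.isOpen_sdiff_of_isCompact_inter (Set.inter_comm U V ▸ hUV)).mem_nhds ⟨hbV, hbU⟩)

theorem GammaH.inter [T2Space A] {G : AmpleGroupoid A} {U V : Set A} (hU : G.GammaH U)
    (hV : G.GammaH V) : G.GammaH (U ∩ V) :=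
  ⟨hU.1.inter hV.1, ⟨hU.2.1.1.inter hV.2.1.1, hU.2.1.2.1.mono Set.inter_subset_left,
    hU.2.1.2.2.mono Set.inter_subset_left⟩, inferInstance⟩

end AmpleGroupoid

open AmpleGroupoid in
/-- For an ample groupoid with Hausdorff unit space, if the inverse
semigroup `Γ_c(G)` of compact Hausdorff open local bisections admits binary meets
(for the natural partial order, which is containment), then the arrow space is
Hausdorff; conversely, if the arrow space is Hausdorff then intersections provide
binary meets in `Γ_c(G)`. -/
theorem stmt19 {A : Type*} [TopologicalSpace A]
    (G : AmpleGroupoid A) (hG : G.AmpleUnits) (hT2 : G.UnitsT2) :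
    ((∀ U V : Set A, G.GammaH U → G.GammaH V →
        ∃ W : Set A, G.GammaH W ∧ W ⊆ U ∧ W ⊆ V ∧
          ∀ W' : Set A, G.GammaH W' → W' ⊆ U → W' ⊆ V → W' ⊆ W) →
      T2Space A) ∧
    (T2Space A → ∀ U V : Set A, G.GammaH U → G.GammaH V →
      G.GammaH (U ∩ V) ∧ U ∩ V ⊆ U ∧ U ∩ V ⊆ V ∧
        ∀ W' : Set A, G.GammaH W' → W' ⊆ U → W' ⊆ V → W' ⊆ U ∩ V) := by
  refine ⟨fun hmeet => t2Space_iff_disjoint_nhds.2 fun a b hab => ?_,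
    fun _ U V hU hV => ⟨hU.inter hV, Set.inter_subset_left, Set.inter_subset_right,
      fun _ _ => Set.subset_inter⟩⟩
  by_cases hs : G.src a = G.src b
  · exact G.disjoint_nhds_of_src_eq hG hT2 hmeet hab hs
  · exact G.disjoint_nhds_of_src_ne hT2 hs
end
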